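/- arXiv:1707.02952 — 2 statements merged into one kernel-verified Lean document; each statement's English description precedes it below -/
import Mathlib

section
/- Let W = W₁ × W₂ be a finite Coxeter group with S = S₁ ⊔ S₂ and τ : Ω → Ω₁ ⊗_ℤ Ω₂ the homomorphism determined by e_s ↦ e_s⊗1, x_s ↦ x_s⊗1 (s ∈ S₁) and e_s ↦ 1⊗e_s, x_s ↦ 1⊗x_s (s ∈ S₂). Then for all I = I₁ ⊔ I₂ and J = J₁ ⊔ J₂ ⊆ S: τ(E_I) = E_{I₁} ⊗ E_{I₂}, and τ(X_{IJ}^s) = X_{I₁J₁}^s ⊗ E_{I₂}E_{J₂} if s ∈ S₁ while τ(X_{IJ}^s) = E_{I₁}E_{J₁} ⊗ X_{I₂J₂}^s if s ∈ S₂. -/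
/-!
`τ` is multiplicative and sends the generators indexed by `S₁` into `Ω₁ ⊗ 1` and those indexed
by `S₂` into `1 ⊗ Ω₂`. The idempotent `E_I` is a product of pairwise commuting factors `e_t`
(`t ∈ I`) and `1 - e_t` (`t ∉ I`); regrouping this product over `S = S₁ ⊔ S₂` into its
`S₁`-part and its `S₂`-part gives `τ(E_I) = (E_{I₁} ⊗ 1)(1 ⊗ E_{I₂}) = E_{I₁} ⊗ E_{I₂}`, and the
formulas for `X_{IJ}^s = E_I x_s E_J` follow by multiplying out in `Ω₁ ⊗ Ω₂`.
-/

open scoped TensorProduct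

noncomputable section

namespace WGraphPaper

variable (k : Type*) [CommRing k] {B B₁ B₂ : Type*}

/-! ### Gyoja's W-graph algebra with coefficients in `k`
(`Omega ℤ M` is the W-graph algebra `Ω(W,S)` itself, `Omega k M` is `kΩ`). -/

/-- The free ring `k⟨e_b, x_b | b ∈ B⟩`; `Sum.inl b` encodes the generator `e_b` and
`Sum.inr b` encodes the generator `x_b`. -/
abbrev FreeGen (B : Type*) := FreeAlgebra k (B ⊕ B)

def eGen (b : B) : FreeGen k B := FreeAlgebra.ι k (Sum.inl b)
def xGen (b : B) : FreeGen k B := FreeAlgebra.ι k (Sum.inr b)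

/-- `altProd a b n` is the alternating product `a * b * a * ⋯` with `n` factors. -/
def altProd {A : Type*} [Monoid A] : A → A → ℕ → A
  | _, _, 0 => 1
  | a, b, n + 1 => a * altProd b a n

/-- The braid commutator `Δ_m(a,b) = (a b a ⋯) - (b a b ⋯)` (`m` factors each). -/
def braidComm {A : Type*} [Ring A] (m : ℕ) (a b : A) : A := altProd a b m - altProd b a m

/-- `ι(T_b) = -v⁻¹ e_b + v (1 - e_b) + x_b`, an element of `(FreeGen k B)[v,v⁻¹]`. -/
def iotaT (b : B) : LaurentPolynomial (FreeGen k B) :=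
  LaurentPolynomial.C (-(eGen k b)) * LaurentPolynomial.T (-1)
    + LaurentPolynomial.C (1 - eGen k b) * LaurentPolynomial.T 1
    + LaurentPolynomial.C (xGen k b)

/-- The coefficient of `v^n` in a Laurent polynomial. -/
def lcoeff {R : Type*} [Semiring R] (p : LaurentPolynomial R) (n : ℤ) : R :=
  (show ℤ →₀ R from AddMonoidAlgebra.coeff p) n

/-- The defining relations of Gyoja's W-graph algebra: the relations (a) and (b) together
with the vanishing of all Laurent coefficients `y^γ(s,t)` of the braid commutators
`Δ_{m_{st}}(ι(T_s), ι(T_t))` (for `m_{st} < ∞`, i.e. `M s t ≠ 0`). -/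
inductive OmegaRel (M : CoxeterMatrix B) : FreeGen k B → FreeGen k B → Prop
  | e_idem (b : B) : OmegaRel M (eGen k b * eGen k b) (eGen k b)
  | e_comm (b b' : B) : OmegaRel M (eGen k b * eGen k b') (eGen k b' * eGen k b)
  | ex (b : B) : OmegaRel M (eGen k b * xGen k b) (xGen k b)
  | xe (b : B) : OmegaRel M (xGen k b * eGen k b) 0
  | braid (b b' : B) (h : M b b' ≠ 0) (γ : ℤ) :
      OmegaRel M (lcoeff (braidComm (M b b') (iotaT k b) (iotaT k b')) γ) 0

/-- Gyoja's W-graph algebra `Ω(W,S)` (for `k = ℤ`), resp. `kΩ(W,S)`, defined from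
the Coxeter matrix of `(W,S)`. -/
abbrev Omega (M : CoxeterMatrix B) := RingQuot (OmegaRel k M)

/-- The image of the generator `e_b` in `Ω`. -/
def eOm (M : CoxeterMatrix B) (b : B) : Omega k M :=
  RingQuot.mkRingHom (OmegaRel k M) (eGen k b)

/-- The image of the generator `x_b` in `Ω`. -/
def xOm (M : CoxeterMatrix B) (b : B) : Omega k M :=
  RingQuot.mkRingHom (OmegaRel k M) (xGen k b)

lemma commute_eOm (M : CoxeterMatrix B) (b b' : B) : Commute (eOm k M b) (eOm k M b') := by
  show _ = _
  rw [eOm, eOm, ← map_mul, ← map_mul]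
  exact RingQuot.mkRingHom_rel (OmegaRel.e_comm b b')

lemma commute_oneSubEOm (M : CoxeterMatrix B) (b b' : B) :
    Commute (1 - eOm k M b) (1 - eOm k M b') :=
  (Commute.one_left _).sub_left ((Commute.one_right _).sub_right (commute_eOm k M b b'))

variable [Fintype B] [DecidableEq B] [DecidableEq B₁] [DecidableEq B₂]

/-- The idempotent `E_I = (∏_{t ∈ I} e_t) (∏_{t ∈ S∖I} (1 - e_t))`. -/
def EOm (M : CoxeterMatrix B) (I : Finset B) : Omega k M :=
  (I.noncommProd (fun b => eOm k M b) (fun _ _ _ _ _ => commute_eOm k M _ _)) *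
    ((Iᶜ).noncommProd (fun b => 1 - eOm k M b) (fun _ _ _ _ _ => commute_oneSubEOm k M _ _))

/-- The edge element `X_{IJ}^s = E_I x_s E_J`. -/
def XOm (M : CoxeterMatrix B) (I J : Finset B) (s : B) : Omega k M :=
  EOm k M I * xOm k M s * EOm k M J

/-- `I ← J` is an edge of the compatibility graph `Q_W`: `I ∖ J ≠ ∅` and no element of
`I ∖ J` commutes (in `W`, i.e. `m_{st} = 2`) with an element of `J ∖ I`. -/
def QEdge (M : CoxeterMatrix B) (I J : Finset B) : Prop :=
  (I \ J).Nonempty ∧ ∀ s ∈ I \ J, ∀ t ∈ J \ I, M s t ≠ 2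

/-- `I ⇆ J`: `I` and `J` are joined by a pair of transversal edges of `Q_W`. -/
def Transversal (M : CoxeterMatrix B) (I J : Finset B) : Prop :=
  QEdge M I J ∧ (J \ I).Nonempty

/-- The generators of the subalgebra `Ψ(W,S)`: all `E_I` and all transversal edge
elements `X_{IJ}`. -/
def psiGens (M : CoxeterMatrix B) : Set (Omega k M) :=
  {a | ∃ I : Finset B, a = EOm k M I} ∪
    {a | ∃ I J : Finset B, ∃ s : B, Transversal M I J ∧ s ∈ I \ J ∧ a = XOm k M I J s}

/-- The subring `Ψ(W,S) ⊆ Ω(W,S)` generated by all `E_I` and all transversal edges. -/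
def Psi (M : CoxeterMatrix B) : Subring (Omega k M) := Subring.closure (psiGens k M)

/-- The subalgebra `kΨ(W,S) ⊆ kΩ(W,S)` generated by all `E_I` and all transversal edges. -/
def PsiAlg (M : CoxeterMatrix B) : Subalgebra k (Omega k M) :=
  Algebra.adjoin k (psiGens k M)

/-! ### Products of Coxeter systems -/

/-- The Coxeter matrix of the product `W₁ × W₂`, on `S = S₁ ⊔ S₂` (each element of `S₁`
commutes with each element of `S₂`). -/
def prodMatrix (M₁ : CoxeterMatrix B₁) (M₂ : CoxeterMatrix B₂) : CoxeterMatrix (B₁ ⊕ B₂) where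
  M i j :=
    match i, j with
    | Sum.inl a, Sum.inl b => M₁ a b
    | Sum.inr a, Sum.inr b => M₂ a b
    | _, _ => 2
  isSymm := by
    unfold Matrix.IsSymm
    ext i j
    rcases i with a | a <;> rcases j with b | b <;>
      simp only [Matrix.transpose_apply] <;>
      first
        | exact M₁.symmetric b a
        | exact M₂.symmetric b a
        | rfl
  diagonal i := by rcases i with a | a <;> simp [CoxeterMatrix.diagonal]
  off_diagonal i j h := by
    rcases i with a | a <;> rcases j with b | b
    · exact M₁.off_diagonal a b (by rintro rfl; exact h rfl)
    · simp
    · simp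
    · exact M₂.off_diagonal a b (by rintro rfl; exact h rfl)

def inlEmb : B₁ ↪ B₁ ⊕ B₂ := ⟨Sum.inl, Sum.inl_injective⟩
def inrEmb : B₂ ↪ B₁ ⊕ B₂ := ⟨Sum.inr, Sum.inr_injective⟩

/-- The subset `I ⊔ K` of `S = S₁ ⊔ S₂`, for `I ⊆ S₁` and `K ⊆ S₂`. -/
def fjoin (I : Finset B₁) (K : Finset B₂) : Finset (B₁ ⊕ B₂) :=
  I.map inlEmb ∪ K.map inrEmb

/-- The part `I₁ = I ∩ S₁` of a subset `I ⊆ S = S₁ ⊔ S₂`. -/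
def part1 (I : Finset (B₁ ⊕ B₂)) : Finset B₁ :=
  I.preimage Sum.inl Sum.inl_injective.injOn

/-- The part `I₂ = I ∩ S₂` of a subset `I ⊆ S = S₁ ⊔ S₂`. -/
def part2 (I : Finset (B₁ ⊕ B₂)) : Finset B₂ :=
  I.preimage Sum.inr Sum.inr_injective.injOn

variable (M₁ : CoxeterMatrix B₁) (M₂ : CoxeterMatrix B₂)

/-- `f` is the parabolic morphism `ι₁ : Ω₁ → Ω` (it sends `e_s ↦ e_s`, `x_s ↦ x_s`
for `s ∈ S₁`). -/
def Parab1Cond (f : Omega k M₁ → Omega k (prodMatrix M₁ M₂)) : Prop :=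
  ∀ b : B₁, f (eOm k M₁ b) = eOm k (prodMatrix M₁ M₂) (Sum.inl b) ∧
    f (xOm k M₁ b) = xOm k (prodMatrix M₁ M₂) (Sum.inl b)

/-- `f` is the parabolic morphism `ι₂ : Ω₂ → Ω` (it sends `e_s ↦ e_s`, `x_s ↦ x_s`
for `s ∈ S₂`). -/
def Parab2Cond (f : Omega k M₂ → Omega k (prodMatrix M₁ M₂)) : Prop :=
  ∀ b : B₂, f (eOm k M₂ b) = eOm k (prodMatrix M₁ M₂) (Sum.inr b) ∧
    f (xOm k M₂ b) = xOm k (prodMatrix M₁ M₂) (Sum.inr b)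

/-- `t` is the morphism `τ : Ω → Ω₁ ⊗ Ω₂` of the paper: it sends `e_s ↦ e_s ⊗ 1`,
`x_s ↦ x_s ⊗ 1` for `s ∈ S₁` and `e_s ↦ 1 ⊗ e_s`, `x_s ↦ 1 ⊗ x_s` for `s ∈ S₂`. -/
def TauCond (t : Omega k (prodMatrix M₁ M₂) → Omega k M₁ ⊗[k] Omega k M₂) : Prop :=
  (∀ b : B₁, t (eOm k (prodMatrix M₁ M₂) (Sum.inl b)) = eOm k M₁ b ⊗ₜ[k] 1 ∧
      t (xOm k (prodMatrix M₁ M₂) (Sum.inl b)) = xOm k M₁ b ⊗ₜ[k] 1) ∧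
  (∀ b : B₂, t (eOm k (prodMatrix M₁ M₂) (Sum.inr b)) = 1 ⊗ₜ[k] eOm k M₂ b ∧
      t (xOm k (prodMatrix M₁ M₂) (Sum.inr b)) = 1 ⊗ₜ[k] xOm k M₂ b)



/-- The coefficientwise extension of a ring homomorphism to Laurent polynomial rings. -/
def laurentMap {R A : Type*} [Semiring R] [Semiring A] (f : R →+* A) :
    LaurentPolynomial R →+* LaurentPolynomial A :=
  AddMonoidAlgebra.liftNCRingHom (LaurentPolynomial.C.comp f)
    { toFun := fun n => LaurentPolynomial.T (Multiplicative.toAdd n)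
      map_one' := LaurentPolynomial.T_zero
      map_mul' := fun _ _ => LaurentPolynomial.T_add _ _ }
    (fun _ n => (LaurentPolynomial.commute_T (Multiplicative.toAdd n) _).symm)

/-- `k` is a good ring for `(W,S)`: it contains `2cos(2π/m_{st})` for all `s,t ∈ S`. -/
def GoodRing (M : CoxeterMatrix B) (k : Subring ℂ) : Prop :=
  ∀ i j : B, M i j ≠ 0 → (2 * Complex.cos (2 * Real.pi / (M i j : ℂ))) ∈ k

/-- The irreducible complex characters of a finite group `G`. -/
def IrrChar (G : Type) [Group G] : Type :=
  {χ : G → ℂ // ∃ V : FDRep ℂ G, CategoryTheory.Simple V ∧ χ = FDRep.character V}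

/-- The degree `d_λ` of an irreducible character `λ` (its value at `1`). -/
def IrrChar.degree {G : Type} [Group G] (χ : IrrChar G) : ℕ := ⌊(χ.val 1).re⌋₊

variable {ι : Type*}

/-- (Z1): the `F^λ` are a decomposition of the identity into orthogonal idempotents. -/
def Z1 {A : Type*} [Ring A] (F : ι → A) : Prop :=
  (∀ l, F l * F l = F l) ∧ (∀ l m, l ≠ m → F l * F m = 0) ∧ ∑ᶠ l, F l = 1

variable [Fintype B] [DecidableEq B]

/-- (Z2): the decomposition is compatible with the one coming from the path-algebra
structure: `E_I F^λ = F^λ E_I`. -/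
def Z2 (M : CoxeterMatrix B) (F : ι → Omega k M) : Prop :=
  ∀ l (I : Finset B), EOm k M I * F l = F l * EOm k M I

/-- (Z3), with a specified partial order `le`: only "downward edges" exist,
i.e. `F^λ Ω F^μ ≠ 0 → λ ⪯ μ`. -/
def Z3At {A : Type*} [Ring A] (F : ι → A) (le : ι → ι → Prop) : Prop :=
  ∀ l m, (∃ a : A, F l * a * F m ≠ 0) → le l m

/-- (Z3): there is a partial order on `Irr(W)` such that only "downward edges" exist. -/
def Z3 {A : Type*} [Ring A] (F : ι → A) : Prop :=
  ∃ le : ι → ι → Prop, IsPartialOrder ι le ∧ Z3At F le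

/-- (Z4): there are surjective `k`-algebra morphisms `k^{d_λ×d_λ} ↠ F^λ kΩ F^λ`. -/
def Z4 (M : CoxeterMatrix B) (F : ι → Omega k M) (d : ι → ℕ) : Prop :=
  ∀ l, ∃ ψ : Matrix (Fin (d l)) (Fin (d l)) k →ₗ[k] Omega k M,
    (∀ x y, ψ (x * y) = ψ x * ψ y) ∧ ψ 1 = F l ∧
      Set.range ψ = {z | ∃ a : Omega k M, z = F l * a * F l}

/-- (Z5): `F^λ X_{IJ} F^λ ∈ kΨ(W,S)` for all edges `I ← J` of `Q_W`. -/
def Z5 (M : CoxeterMatrix B) (F : ι → Omega k M) : Prop :=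
  ∀ l (I J : Finset B) (s : B), QEdge M I J → s ∈ I \ J →
    F l * XOm k M I J s * F l ∈ PsiAlg k M

/-- (Z6): `F^λ ∈ kΨ(W,S)`. -/
def Z6 (M : CoxeterMatrix B) (F : ι → Omega k M) : Prop :=
  ∀ l, F l ∈ PsiAlg k M

/-- The family satisfies all of (Z1)–(Z6), i.e. the strong W-graph decomposition
conjecture holds via this family (`d` is the degree function on `Irr(W)`). -/
def StrongZ (M : CoxeterMatrix B) (F : ι → Omega k M) (d : ι → ℕ) : Prop :=
  Z1 F ∧ Z2 k M F ∧ Z3 F ∧ Z4 k M F d ∧ Z5 k M F ∧ Z6 k M F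

/-- The maximal length (number of steps) of a strict chain for the relation `le`. -/
def orderHeight (le : ι → ι → Prop) : ℕ :=
  sSup {n | ∃ c : Fin (n + 1) → ι, Function.Injective c ∧
    ∀ i j : Fin (n + 1), i < j → le (c i) (c j)}


section NoncommProd

variable {α γ β : Type*} [Monoid β]

open Finset

theorem _root_.Finset.noncommProd_disjSum (s : Finset α) (t : Finset γ) (f : α ⊕ γ → β)
    (comm : (s.disjSum t : Set (α ⊕ γ)).Pairwise (Function.onFun Commute f)) :
    (s.disjSum t).noncommProd f comm =
      s.noncommProd (f ∘ Sum.inl)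
          (fun _ ha _ hb hab => comm (mem_coe.2 (inl_mem_disjSum.2 ha))
            (mem_coe.2 (inl_mem_disjSum.2 hb)) (Sum.inl_injective.ne hab)) *
        t.noncommProd (f ∘ Sum.inr)
          (fun _ ha _ hb hab => comm (mem_coe.2 (inr_mem_disjSum.2 ha))
            (mem_coe.2 (inr_mem_disjSum.2 hb)) (Sum.inr_injective.ne hab)) := by
  simp only [noncommProd, val_disjSum, Multiset.disjSum, Multiset.map_add, Multiset.map_map]
  exact Multiset.noncommProd_add _ _ _

theorem _root_.Finset.noncommProd_eq_toLeft_mul_toRight (u : Finset (α ⊕ γ)) (f : α ⊕ γ → β)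
    (comm : (u : Set (α ⊕ γ)).Pairwise (Function.onFun Commute f)) :
    u.noncommProd f comm =
      u.toLeft.noncommProd (f ∘ Sum.inl)
          (fun _ ha _ hb hab => comm (mem_coe.2 (mem_toLeft.1 ha))
            (mem_coe.2 (mem_toLeft.1 hb)) (Sum.inl_injective.ne hab)) *
        u.toRight.noncommProd (f ∘ Sum.inr)
          (fun _ ha _ hb hab => comm (mem_coe.2 (mem_toRight.1 ha))
            (mem_coe.2 (mem_toRight.1 hb)) (Sum.inr_injective.ne hab)) :=
  (noncommProd_congr toLeft_disjSum_toRight.symm (fun _ _ => rfl) _).trans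
    (noncommProd_disjSum _ _ _ _)

theorem _root_.Finset.toLeft_compl [Fintype α] [Fintype γ] [DecidableEq α] [DecidableEq γ]
    (u : Finset (α ⊕ γ)) : uᶜ.toLeft = u.toLeftᶜ := by
  ext; simp

theorem _root_.Finset.toRight_compl [Fintype α] [Fintype γ] [DecidableEq α] [DecidableEq γ]
    (u : Finset (α ⊕ γ)) : uᶜ.toRight = u.toRightᶜ := by
  ext; simp

variable {R A₁ A₂ C : Type*} [CommSemiring R] [Semiring A₁] [Algebra R A₁]
  [Semiring A₂] [Algebra R A₂] [Semiring C]

theorem _root_.Algebra.TensorProduct.map_noncommProd_eq_tmul (t : C →+* A₁ ⊗[R] A₂)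
    (u : Finset (α ⊕ γ)) (f : α ⊕ γ → C)
    (comm : (u : Set (α ⊕ γ)).Pairwise (Function.onFun Commute f))
    (f₁ : α → A₁) (f₂ : γ → A₂) (h₁ : ∀ a b, Commute (f₁ a) (f₁ b))
    (h₂ : ∀ a b, Commute (f₂ a) (f₂ b)) (hf₁ : ∀ a, t (f (Sum.inl a)) = f₁ a ⊗ₜ 1)
    (hf₂ : ∀ b, t (f (Sum.inr b)) = 1 ⊗ₜ f₂ b) :
    t (u.noncommProd f comm) =
      u.toLeft.noncommProd f₁ (fun a _ b _ _ => h₁ a b) ⊗ₜ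
        u.toRight.noncommProd f₂ (fun a _ b _ _ => h₂ a b) := by
  have hL : ∀ comm', t (u.toLeft.noncommProd (f ∘ Sum.inl) comm') =
      u.toLeft.noncommProd f₁ (fun a _ b _ _ => h₁ a b) ⊗ₜ 1 :=
    fun _ => (map_noncommProd _ _ _ t).trans <|
      (noncommProd_congr rfl (fun a _ => hf₁ a) _).trans
        (map_noncommProd _ _ _ Algebra.TensorProduct.includeLeftRingHom).symm
  have hR : ∀ comm', t (u.toRight.noncommProd (f ∘ Sum.inr) comm') =
      1 ⊗ₜ u.toRight.noncommProd f₂ (fun a _ b _ _ => h₂ a b) :=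
    fun _ => (map_noncommProd _ _ _ t).trans <|
      (noncommProd_congr rfl (fun b _ => hf₂ b) _).trans
        (map_noncommProd _ _ _ Algebra.TensorProduct.includeRight).symm
  rw [noncommProd_eq_toLeft_mul_toRight, map_mul]
  exact (congrArg₂ (· * ·) (hL _) (hR _)).trans
    (by rw [Algebra.TensorProduct.tmul_mul_tmul, mul_one, one_mul])

end NoncommProd

theorem part1_eq_toLeft {α γ : Type*} (I : Finset (α ⊕ γ)) : part1 I = I.toLeft := by
  ext; simp [part1]

theorem part2_eq_toRight {α γ : Type*} (I : Finset (α ⊕ γ)) : part2 I = I.toRight := by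
  ext; simp [part2]

section TauCond

variable {k} [Fintype B₁] [Fintype B₂] {M₁ M₂}
  {t : Omega k (prodMatrix M₁ M₂) →+* Omega k M₁ ⊗[k] Omega k M₂}

open Algebra.TensorProduct in
theorem TauCond.map_EOm (ht : TauCond k M₁ M₂ t) (I : Finset (B₁ ⊕ B₂)) :
    t (EOm k (prodMatrix M₁ M₂) I) = EOm k M₁ (part1 I) ⊗ₜ EOm k M₂ (part2 I) := by
  have one_sub_inl : ∀ b, t (1 - eOm k _ (Sum.inl b)) = (1 - eOm k M₁ b) ⊗ₜ 1 := fun b => by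
    rw [map_sub, map_one, (ht.1 b).1, one_def, TensorProduct.sub_tmul]
  have one_sub_inr : ∀ b, t (1 - eOm k _ (Sum.inr b)) = 1 ⊗ₜ (1 - eOm k M₂ b) := fun b => by
    rw [map_sub, map_one, (ht.2 b).1, one_def, TensorProduct.tmul_sub]
  have h_e := map_noncommProd_eq_tmul t I (eOm k _) (fun _ _ _ _ _ => commute_eOm k _ _ _)
    _ _ (commute_eOm k M₁) (commute_eOm k M₂) (fun b => (ht.1 b).1) (fun b => (ht.2 b).1)
  have h_one_sub_e := map_noncommProd_eq_tmul t Iᶜ (fun b => 1 - eOm k _ b)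
    (fun _ _ _ _ _ => commute_oneSubEOm k _ _ _) _ _ (commute_oneSubEOm k M₁)
    (commute_oneSubEOm k M₂) one_sub_inl one_sub_inr
  refine (map_mul t _ _).trans ((congrArg₂ (· * ·) h_e h_one_sub_e).trans ?_)
  rw [tmul_mul_tmul, Finset.toLeft_compl, Finset.toRight_compl, part1_eq_toLeft,
    part2_eq_toRight]
  rfl

open Algebra.TensorProduct in
theorem TauCond.map_XOm_inl (ht : TauCond k M₁ M₂ t) (I J : Finset (B₁ ⊕ B₂)) (s : B₁) :
    t (XOm k (prodMatrix M₁ M₂) I J (Sum.inl s)) =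
      XOm k M₁ (part1 I) (part1 J) s ⊗ₜ (EOm k M₂ (part2 I) * EOm k M₂ (part2 J)) := by
  rw [XOm, XOm, map_mul, map_mul, ht.map_EOm, ht.map_EOm, (ht.1 s).2, tmul_mul_tmul,
    tmul_mul_tmul, mul_one]

open Algebra.TensorProduct in
theorem TauCond.map_XOm_inr (ht : TauCond k M₁ M₂ t) (I J : Finset (B₁ ⊕ B₂)) (s : B₂) :
    t (XOm k (prodMatrix M₁ M₂) I J (Sum.inr s)) =
      (EOm k M₁ (part1 I) * EOm k M₁ (part1 J)) ⊗ₜ XOm k M₂ (part2 I) (part2 J) s := by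
  rw [XOm, XOm, map_mul, map_mul, ht.map_EOm, ht.map_EOm, (ht.2 s).2, tmul_mul_tmul,
    tmul_mul_tmul, mul_one]

end TauCond

theorem statement6_general {B₁ B₂ : Type*} [Fintype B₁] [DecidableEq B₁] [Fintype B₂]
    [DecidableEq B₂] (M₁ : CoxeterMatrix B₁) (M₂ : CoxeterMatrix B₂)
    (t : Omega ℤ (prodMatrix M₁ M₂) →+* Omega ℤ M₁ ⊗[ℤ] Omega ℤ M₂)
    (ht : TauCond ℤ M₁ M₂ ⇑t) :
    (∀ I : Finset (B₁ ⊕ B₂),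
      t (EOm ℤ (prodMatrix M₁ M₂) I) = EOm ℤ M₁ (part1 I) ⊗ₜ[ℤ] EOm ℤ M₂ (part2 I)) ∧
    (∀ I J : Finset (B₁ ⊕ B₂), ∀ s : B₁,
      t (XOm ℤ (prodMatrix M₁ M₂) I J (Sum.inl s)) =
        XOm ℤ M₁ (part1 I) (part1 J) s ⊗ₜ[ℤ] (EOm ℤ M₂ (part2 I) * EOm ℤ M₂ (part2 J))) ∧
    (∀ I J : Finset (B₁ ⊕ B₂), ∀ s : B₂,
      t (XOm ℤ (prodMatrix M₁ M₂) I J (Sum.inr s)) =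
        (EOm ℤ M₁ (part1 I) * EOm ℤ M₁ (part1 J)) ⊗ₜ[ℤ] XOm ℤ M₂ (part2 I) (part2 J) s) :=
  ⟨ht.map_EOm, ht.map_XOm_inl, ht.map_XOm_inr⟩

/-- the morphism `τ : Ω → Ω₁ ⊗_ℤ Ω₂` satisfies
`τ(E_I) = E_{I₁} ⊗ E_{I₂}` and `τ(X_{IJ}^s) = X_{I₁J₁}^s ⊗ E_{I₂}E_{J₂}` for `s ∈ S₁`,
resp. `τ(X_{IJ}^s) = E_{I₁}E_{J₁} ⊗ X_{I₂J₂}^s` for `s ∈ S₂`. -/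
theorem statement6 {B₁ B₂ : Type*} [Fintype B₁] [DecidableEq B₁] [Fintype B₂]
    [DecidableEq B₂] (M₁ : CoxeterMatrix B₁) (M₂ : CoxeterMatrix B₂)
    {W₁ W₂ : Type*} [Group W₁] [Group W₂] [Finite W₁] [Finite W₂]
    (cs₁ : CoxeterSystem M₁ W₁) (cs₂ : CoxeterSystem M₂ W₂)
    (cs : CoxeterSystem (prodMatrix M₁ M₂) (W₁ × W₂))
    (t : Omega ℤ (prodMatrix M₁ M₂) →+* Omega ℤ M₁ ⊗[ℤ] Omega ℤ M₂)
    (ht : TauCond ℤ M₁ M₂ ⇑t) :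
    (∀ I : Finset (B₁ ⊕ B₂),
      t (EOm ℤ (prodMatrix M₁ M₂) I) = EOm ℤ M₁ (part1 I) ⊗ₜ[ℤ] EOm ℤ M₂ (part2 I)) ∧
    (∀ I J : Finset (B₁ ⊕ B₂), ∀ s : B₁,
      t (XOm ℤ (prodMatrix M₁ M₂) I J (Sum.inl s)) =
        XOm ℤ M₁ (part1 I) (part1 J) s ⊗ₜ[ℤ] (EOm ℤ M₂ (part2 I) * EOm ℤ M₂ (part2 J))) ∧
    (∀ I J : Finset (B₁ ⊕ B₂), ∀ s : B₂,
      t (XOm ℤ (prodMatrix M₁ M₂) I J (Sum.inr s)) =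
        (EOm ℤ M₁ (part1 I) * EOm ℤ M₁ (part1 J)) ⊗ₜ[ℤ] XOm ℤ M₂ (part2 I) (part2 J) s) :=
  statement6_general M₁ M₂ t ht

end WGraphPaper

end
end

section
/- Let W = W₁ × W₂ be a finite Coxeter group with S = S₁ ⊔ S₂ and τ : Ω → Ω₁ ⊗_ℤ Ω₂ the homomorphism determined by e_s ↦ e_s⊗1, x_s ↦ x_s⊗1 (s ∈ S₁) and e_s ↦ 1⊗e_s, x_s ↦ 1⊗x_s (s ∈ S₂). Then τ maps the subalgebra Ψ(W,S) onto Ψ(W₁,S₁) ⊗_ℤ Ψ(W₂,S₂). -/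
open scoped TensorProduct

noncomputable section

namespace WGraphPaper

variable (k : Type*) [CommRing k] {B B₁ B₂ : Type*}

variable [Fintype B] [DecidableEq B] [DecidableEq B₁] [DecidableEq B₂]

variable (M₁ : CoxeterMatrix B₁) (M₂ : CoxeterMatrix B₂)

variable {ι : Type*}

variable [Fintype B] [DecidableEq B]

/-!
Every subset of `S = S₁ ⊔ S₂` is `I₁ ⊔ I₂` with `Iᵢ ⊆ Sᵢ`, and `τ(E_{I₁ ⊔ I₂}) = E_{I₁} ⊗ E_{I₂}`.
Since every element of `S₁` commutes with every element of `S₂`, a transversal pair `I ⇆ J`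
of `Q_W` changes only one of the two parts, so `τ(X_{IJ})` is `X_{I₁J₁} ⊗ E_{I₂}` or
`E_{I₁} ⊗ X_{I₂J₂}`; hence `τ(Ψ) ⊆ Ψ₁ ⊗ Ψ₂`. Conversely, `∑_{K ⊆ S₂} E_K = 1` gives
`a ⊗ 1 = ∑_K τ(a_K)` with `a_K ∈ Ψ` for every generator `a` of `Ψ₁` (e.g. `a_K = E_{I ⊔ K}` for
`a = E_I`), symmetrically for `1 ⊗ b`, and `a ⊗ b = (a ⊗ 1)(1 ⊗ b)`.
-/

section NoncommProd

open Finset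

variable {α A : Type*} [Ring A]

theorem _root_.Finset.isIdempotentElem_noncommProd {s : Finset α} {f : α → A} (comm)
    (hf : ∀ x ∈ s, IsIdempotentElem (f x)) : IsIdempotentElem (s.noncommProd f comm) :=
  (noncommProd_mul_distrib f f comm comm comm).symm.trans (noncommProd_congr rfl hf _)

theorem _root_.Finset.noncommProd_map {β : Type*} (s : Finset α) (e : α ↪ β) (f : β → A) (comm) :
    (s.map e).noncommProd f comm =
      s.noncommProd (f ∘ e) fun _ hx _ hy h =>
        comm (mem_map_of_mem e hx) (mem_map_of_mem e hy) (e.injective.ne h) := by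
  simp [noncommProd, Multiset.map_map]

theorem _root_.Finset.eq_of_forall_notMem_sdiff [DecidableEq α] {s t : Finset α}
    (hst : ∀ x, x ∉ s \ t) (hts : ∀ x, x ∉ t \ s) : s = t :=
  Subset.antisymm (sdiff_eq_empty_iff_subset.1 (eq_empty_iff_forall_notMem.2 hst))
    (sdiff_eq_empty_iff_subset.1 (eq_empty_iff_forall_notMem.2 hts))

open scoped IsMulCommutative in
/-- Expand `∏_x (f x + (1 - f x)) = 1` in the commutative subring generated by the `f x`. -/
theorem _root_.Finset.sum_noncommProd_mul_noncommProd_compl [Fintype α] [DecidableEq α] (f : α → A)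
    (hf : ∀ x y, Commute (f x) (f y)) :
    ∑ I : Finset α, I.noncommProd f (fun _ _ _ _ _ => hf _ _) *
      Iᶜ.noncommProd (fun x => 1 - f x)
        (fun _ _ _ _ _ => (Commute.one_left _).sub_left ((Commute.one_right _).sub_right (hf _ _)))
      = 1 := by
  let C := Subring.closure (Set.range f)
  have : IsMulCommutative C :=
    Subring.isMulCommutative_closure (by rintro _ ⟨x, rfl⟩ _ ⟨y, rfl⟩; exact hf x y)
  let g : α → C := fun x => ⟨f x, Subring.subset_closure ⟨x, rfl⟩⟩
  have hprod : ∀ (I : Finset α) (h : α → C),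
      I.noncommProd (fun x => (h x : A)) (fun _ _ _ _ _ => (Commute.all (h _) (h _)).map C.subtype)
        = C.subtype (∏ x ∈ I, h x) := fun I h =>
    (noncommProd_eq_prod I h ▸ map_noncommProd I h _ C.subtype).symm
  have hexpand := congrArg C.subtype (prod_add g (1 - g) univ)
  simp only [Pi.sub_apply, Pi.one_apply, add_sub_cancel, prod_const_one, map_one, powerset_univ,
    map_sum, map_mul] at hexpand
  refine (sum_congr rfl fun I _ => ?_).trans hexpand.symm
  rw [← compl_eq_univ_sdiff, ← hprod, ← hprod]
  rfl

end NoncommProd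

open Algebra.TensorProduct (includeLeftRingHom includeLeftRingHom_apply includeRight
  includeRight_apply tmul_mul_tmul)
open Finset (map_noncommProd)

section ProdMatrix

variable {B₁ B₂ : Type*} (M₁ : CoxeterMatrix B₁) (M₂ : CoxeterMatrix B₂)

@[simp] lemma prodMatrix_inl_inl (a b : B₁) :
    prodMatrix M₁ M₂ (Sum.inl a) (Sum.inl b) = M₁ a b := rfl

@[simp] lemma prodMatrix_inr_inr (a b : B₂) :
    prodMatrix M₁ M₂ (Sum.inr a) (Sum.inr b) = M₂ a b := rfl

@[simp] lemma prodMatrix_inl_inr (a : B₁) (b : B₂) :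
    prodMatrix M₁ M₂ (Sum.inl a) (Sum.inr b) = 2 := rfl

@[simp] lemma prodMatrix_inr_inl (a : B₂) (b : B₁) :
    prodMatrix M₁ M₂ (Sum.inr a) (Sum.inl b) = 2 := rfl

end ProdMatrix

section Fjoin

variable {B₁ B₂ : Type*} [DecidableEq B₁] [DecidableEq B₂]

@[simp] lemma inl_mem_fjoin {I : Finset B₁} {K : Finset B₂} {b : B₁} :
    Sum.inl b ∈ fjoin I K ↔ b ∈ I := by
  simp [fjoin, inlEmb, inrEmb]

@[simp] lemma inr_mem_fjoin {I : Finset B₁} {K : Finset B₂} {b : B₂} :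
    Sum.inr b ∈ fjoin I K ↔ b ∈ K := by
  simp [fjoin, inlEmb, inrEmb]

lemma exists_eq_fjoin (I : Finset (B₁ ⊕ B₂)) : ∃ I₁ I₂, I = fjoin I₁ I₂ :=
  ⟨part1 I, part2 I, by ext (b | b) <;> simp [part1, part2]⟩

lemma compl_fjoin [Fintype B₁] [Fintype B₂] (I : Finset B₁) (K : Finset B₂) :
    (fjoin I K)ᶜ = fjoin Iᶜ Kᶜ := by
  ext (b | b) <;> simp

lemma fjoin_sdiff_fjoin (I J : Finset B₁) (K L : Finset B₂) :
    fjoin I K \ fjoin J L = fjoin (I \ J) (K \ L) := by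
  ext (b | b) <;> simp

lemma fjoin_nonempty {I : Finset B₁} {K : Finset B₂} :
    (fjoin I K).Nonempty ↔ I.Nonempty ∨ K.Nonempty := by
  simp [fjoin]

lemma forall_mem_fjoin {I : Finset B₁} {K : Finset B₂} {p : B₁ ⊕ B₂ → Prop} :
    (∀ x ∈ fjoin I K, p x) ↔ (∀ a ∈ I, p (Sum.inl a)) ∧ ∀ b ∈ K, p (Sum.inr b) := by
  simp [fjoin, inlEmb, inrEmb, or_imp, forall_and]

lemma noncommProd_fjoin {A : Type*} [Ring A] (I : Finset B₁) (K : Finset B₂) (f : B₁ ⊕ B₂ → A)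
    (hf : ∀ x y, Commute (f x) (f y)) :
    (fjoin I K).noncommProd f (fun _ _ _ _ _ => hf _ _) =
      I.noncommProd (fun a => f (Sum.inl a)) (fun _ _ _ _ _ => hf _ _) *
        K.noncommProd (fun b => f (Sum.inr b)) (fun _ _ _ _ _ => hf _ _) := by
  have hdisj : Disjoint (I.map inlEmb) (K.map (inrEmb : B₂ ↪ B₁ ⊕ B₂)) := by
    simp [Finset.disjoint_left, inlEmb, inrEmb]
  exact (Finset.noncommProd_union_of_disjoint hdisj f _).trans
    (congrArg₂ (· * ·) (Finset.noncommProd_map _ _ _ _) (Finset.noncommProd_map _ _ _ _))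

lemma transversal_prodMatrix_fjoin_iff {M₁ : CoxeterMatrix B₁} {M₂ : CoxeterMatrix B₂}
    {I J : Finset B₁} {K L : Finset B₂} :
    Transversal (prodMatrix M₁ M₂) (fjoin I K) (fjoin J L) ↔
      Transversal M₁ I J ∧ K = L ∨ I = J ∧ Transversal M₂ K L := by
  simp only [Transversal, QEdge, fjoin_sdiff_fjoin, fjoin_nonempty, forall_mem_fjoin,
    prodMatrix_inl_inl, prodMatrix_inl_inr, prodMatrix_inr_inl, prodMatrix_inr_inr, ne_eq,
    not_true_eq_false, imp_false]
  constructor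
  · rintro ⟨⟨⟨a, ha⟩ | ⟨c, hc⟩, hM₁, hM₂⟩, ⟨b, hb⟩ | ⟨d, hd⟩⟩
    · refine Or.inl ⟨⟨⟨⟨a, ha⟩, fun x hx => (hM₁ x hx).1⟩, ⟨b, hb⟩⟩, ?_⟩
      exact Finset.eq_of_forall_notMem_sdiff (fun c hc => (hM₂ c hc).1 b hb) (hM₁ a ha).2
    · exact absurd hd ((hM₁ a ha).2 d)
    · exact absurd hb ((hM₂ c hc).1 b)
    · refine Or.inr ⟨?_, ⟨⟨c, hc⟩, fun x hx => (hM₂ x hx).2⟩, ⟨d, hd⟩⟩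
      exact Finset.eq_of_forall_notMem_sdiff (fun a ha => (hM₁ a ha).2 d hd) (hM₂ c hc).1
  · rintro (⟨⟨⟨hIJ, hM⟩, hJI⟩, rfl⟩ | ⟨rfl, ⟨hKL, hM⟩, hLK⟩) <;> simp_all

end Fjoin

section Idempotents

variable {k : Type*} [CommRing k] {B : Type*} (M : CoxeterMatrix B)

lemma isIdempotentElem_eOm (b : B) : IsIdempotentElem (eOm k M b) := by
  rw [IsIdempotentElem, eOm, ← map_mul]
  exact RingQuot.mkRingHom_rel (OmegaRel.e_idem b)

variable [Fintype B] [DecidableEq B]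

lemma isIdempotentElem_EOm (I : Finset B) : IsIdempotentElem (EOm k M I) :=
  IsIdempotentElem.mul_of_commute
    (Finset.noncommProd_commute _ _ _ _ fun _ _ => (Finset.noncommProd_commute _ _ _ _
      fun _ _ => (Commute.one_left _).sub_left (commute_eOm k M _ _)).symm)
    (Finset.isIdempotentElem_noncommProd _ fun b _ => isIdempotentElem_eOm M b)
    (Finset.isIdempotentElem_noncommProd _ fun b _ => (isIdempotentElem_eOm M b).one_sub)

lemma sum_EOm : ∑ I : Finset B, EOm k M I = 1 :=
  Finset.sum_noncommProd_mul_noncommProd_compl _ (commute_eOm k M)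

end Idempotents

section Tau

variable {k : Type*} [CommRing k] {B₁ B₂ : Type*} [DecidableEq B₁] [DecidableEq B₂]

lemma map_noncommProd_fjoin {A A₁ A₂ : Type*} [Ring A] [Ring A₁] [Ring A₂] [Algebra k A₁]
    [Algebra k A₂] (t : A →+* A₁ ⊗[k] A₂) {f : B₁ ⊕ B₂ → A} {f₁ : B₁ → A₁} {f₂ : B₂ → A₂}
    (hf : ∀ x y, Commute (f x) (f y)) (hf₁ : ∀ x y, Commute (f₁ x) (f₁ y))
    (hf₂ : ∀ x y, Commute (f₂ x) (f₂ y)) (ht₁ : ∀ b, t (f (Sum.inl b)) = f₁ b ⊗ₜ 1)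
    (ht₂ : ∀ b, t (f (Sum.inr b)) = 1 ⊗ₜ f₂ b) (I : Finset B₁) (K : Finset B₂) :
    t ((fjoin I K).noncommProd f fun _ _ _ _ _ => hf _ _) =
      I.noncommProd f₁ (fun _ _ _ _ _ => hf₁ _ _) ⊗ₜ K.noncommProd f₂ fun _ _ _ _ _ => hf₂ _ _ := by
  calc t _ = (fjoin I K).noncommProd (fun x => t (f x)) (fun _ _ _ _ _ => (hf _ _).map t) :=
        map_noncommProd _ _ _ t
    _ = I.noncommProd (fun b => includeLeftRingHom (f₁ b)) (fun _ _ _ _ _ => (hf₁ _ _).map _) *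
          K.noncommProd (fun b => includeRight (f₂ b)) (fun _ _ _ _ _ => (hf₂ _ _).map _) := by
        rw [noncommProd_fjoin _ _ _ fun x y => (hf x y).map t]
        simp only [ht₁, ht₂, includeLeftRingHom_apply, includeRight_apply]
    _ = _ := by
        rw [← map_noncommProd _ _ fun _ _ _ _ _ => hf₁ _ _,
          ← map_noncommProd _ _ fun _ _ _ _ _ => hf₂ _ _, includeLeftRingHom_apply,
          includeRight_apply, tmul_mul_tmul, mul_one, one_mul]

variable [Fintype B₁] [Fintype B₂] {M₁ : CoxeterMatrix B₁} {M₂ : CoxeterMatrix B₂}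
  {t : Omega k (prodMatrix M₁ M₂) →+* Omega k M₁ ⊗[k] Omega k M₂}

lemma tau_EOm_fjoin (ht : TauCond k M₁ M₂ t) (I : Finset B₁) (K : Finset B₂) :
    t (EOm k (prodMatrix M₁ M₂) (fjoin I K)) = EOm k M₁ I ⊗ₜ EOm k M₂ K := by
  simp only [EOm, map_mul, compl_fjoin]
  rw [map_noncommProd_fjoin t (commute_eOm k _) (commute_eOm k M₁) (commute_eOm k M₂)
      (fun b => (ht.1 b).1) (fun b => (ht.2 b).1),
    map_noncommProd_fjoin t (commute_oneSubEOm k _) (commute_oneSubEOm k M₁)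
      (commute_oneSubEOm k M₂)
      (fun b => by
        rw [map_sub, map_one, (ht.1 b).1, TensorProduct.sub_tmul, Algebra.TensorProduct.one_def])
      (fun b => by
        rw [map_sub, map_one, (ht.2 b).1, TensorProduct.tmul_sub, Algebra.TensorProduct.one_def]),
    tmul_mul_tmul]

lemma tau_XOm_fjoin_inl (ht : TauCond k M₁ M₂ t) (I J : Finset B₁) (K : Finset B₂) (s : B₁) :
    t (XOm k (prodMatrix M₁ M₂) (fjoin I K) (fjoin J K) (Sum.inl s)) =
      XOm k M₁ I J s ⊗ₜ EOm k M₂ K := by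
  rw [XOm, map_mul, map_mul, tau_EOm_fjoin ht, tau_EOm_fjoin ht, (ht.1 s).2, tmul_mul_tmul,
    tmul_mul_tmul, mul_one, (isIdempotentElem_EOm M₂ K).eq, XOm]

lemma tau_XOm_fjoin_inr (ht : TauCond k M₁ M₂ t) (I : Finset B₁) (K L : Finset B₂) (s : B₂) :
    t (XOm k (prodMatrix M₁ M₂) (fjoin I K) (fjoin I L) (Sum.inr s)) =
      EOm k M₁ I ⊗ₜ XOm k M₂ K L s := by
  rw [XOm, map_mul, map_mul, tau_EOm_fjoin ht, tau_EOm_fjoin ht, (ht.2 s).2, tmul_mul_tmul,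
    tmul_mul_tmul, mul_one, (isIdempotentElem_EOm M₁ I).eq, XOm]

lemma exists_tau_eq_tmul_of_mem_psiGens (ht : TauCond k M₁ M₂ t)
    {g : Omega k (prodMatrix M₁ M₂)} (hg : g ∈ psiGens k (prodMatrix M₁ M₂)) :
    ∃ a ∈ psiGens k M₁, ∃ b ∈ psiGens k M₂, t g = a ⊗ₜ b := by
  rcases hg with ⟨I, rfl⟩ | ⟨I, J, s, hIJ, hs, rfl⟩
  · obtain ⟨I₁, I₂, rfl⟩ := exists_eq_fjoin I
    exact ⟨_, Or.inl ⟨I₁, rfl⟩, _, Or.inl ⟨I₂, rfl⟩, tau_EOm_fjoin ht I₁ I₂⟩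
  obtain ⟨I₁, I₂, rfl⟩ := exists_eq_fjoin I
  obtain ⟨J₁, J₂, rfl⟩ := exists_eq_fjoin J
  rw [fjoin_sdiff_fjoin] at hs
  rcases transversal_prodMatrix_fjoin_iff.1 hIJ with ⟨hIJ₁, rfl⟩ | ⟨rfl, hIJ₂⟩ <;>
    rcases s with s | s <;> simp only [inl_mem_fjoin, inr_mem_fjoin, Finset.sdiff_self,
      Finset.notMem_empty] at hs
  · exact ⟨_, Or.inr ⟨I₁, J₁, s, hIJ₁, hs, rfl⟩, _, Or.inl ⟨I₂, rfl⟩,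
      tau_XOm_fjoin_inl ht I₁ J₁ I₂ s⟩
  · exact ⟨_, Or.inl ⟨I₁, rfl⟩, _, Or.inr ⟨I₂, J₂, s, hIJ₂, hs, rfl⟩,
      tau_XOm_fjoin_inr ht I₁ I₂ J₂ s⟩

lemma map_includeLeft_Psi_le (ht : TauCond k M₁ M₂ t) :
    (Psi k M₁).map includeLeftRingHom ≤
      (Psi k (prodMatrix M₁ M₂)).map (S := Omega k M₁ ⊗[k] Omega k M₂) t := by
  rw [Psi, RingHom.map_closure, Subring.closure_le]
  rintro _ ⟨g, hg, rfl⟩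
  rw [includeLeftRingHom_apply, ← sum_EOm (k := k) M₂, TensorProduct.tmul_sum]
  refine sum_mem fun K _ => ?_
  rcases hg with ⟨I, rfl⟩ | ⟨I, J, s, hIJ, hs, rfl⟩
  · exact ⟨_, Subring.subset_closure (Or.inl ⟨fjoin I K, rfl⟩), tau_EOm_fjoin ht I K⟩
  · refine ⟨_, Subring.subset_closure (Or.inr ⟨fjoin I K, fjoin J K, Sum.inl s,
      transversal_prodMatrix_fjoin_iff.2 (Or.inl ⟨hIJ, rfl⟩), ?_, rfl⟩),
      tau_XOm_fjoin_inl ht I J K s⟩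
    simpa [fjoin_sdiff_fjoin] using hs

lemma map_includeRight_Psi_le (ht : TauCond k M₁ M₂ t) :
    (Psi k M₂).map (includeRight : Omega k M₂ →ₐ[k] Omega k M₁ ⊗[k] Omega k M₂).toRingHom ≤
      (Psi k (prodMatrix M₁ M₂)).map (S := Omega k M₁ ⊗[k] Omega k M₂) t := by
  rw [Psi, RingHom.map_closure, Subring.closure_le]
  rintro _ ⟨g, hg, rfl⟩
  rw [AlgHom.toRingHom_eq_coe, RingHom.coe_coe, includeRight_apply, ← sum_EOm (k := k) M₁,
    TensorProduct.sum_tmul]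
  refine sum_mem fun I _ => ?_
  rcases hg with ⟨K, rfl⟩ | ⟨K, L, s, hKL, hs, rfl⟩
  · exact ⟨_, Subring.subset_closure (Or.inl ⟨fjoin I K, rfl⟩), tau_EOm_fjoin ht I K⟩
  · refine ⟨_, Subring.subset_closure (Or.inr ⟨fjoin I K, fjoin I L, Sum.inr s,
      transversal_prodMatrix_fjoin_iff.2 (Or.inr ⟨rfl, hKL⟩), ?_, rfl⟩),
      tau_XOm_fjoin_inr ht I K L s⟩
    simpa [fjoin_sdiff_fjoin] using hs

end Tau

theorem statement7_general {B₁ B₂ : Type*} [Fintype B₁] [DecidableEq B₁] [Fintype B₂]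
    [DecidableEq B₂] (M₁ : CoxeterMatrix B₁) (M₂ : CoxeterMatrix B₂)
    (t : Omega ℤ (prodMatrix M₁ M₂) →+* Omega ℤ M₁ ⊗[ℤ] Omega ℤ M₂)
    (ht : TauCond ℤ M₁ M₂ ⇑t) :
    Subring.map t (Psi ℤ (prodMatrix M₁ M₂)) =
      Subring.closure
        {z : Omega ℤ M₁ ⊗[ℤ] Omega ℤ M₂ |
          ∃ a ∈ Psi ℤ M₁, ∃ b ∈ Psi ℤ M₂, z = a ⊗ₜ[ℤ] b} := by
  apply le_antisymm
  · rw [Psi, RingHom.map_closure]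
    refine Subring.closure_mono (Set.image_subset_iff.2 fun g hg => ?_)
    obtain ⟨a, ha, b, hb, hab⟩ := exists_tau_eq_tmul_of_mem_psiGens ht hg
    exact ⟨a, Subring.subset_closure ha, b, Subring.subset_closure hb, hab⟩
  · rw [Subring.closure_le]
    rintro _ ⟨a, ha, b, hb, rfl⟩
    have hab := mul_mem (map_includeLeft_Psi_le ht ⟨a, ha, rfl⟩)
      (map_includeRight_Psi_le ht ⟨b, hb, rfl⟩)
    rwa [AlgHom.toRingHom_eq_coe, RingHom.coe_coe, includeLeftRingHom_apply, includeRight_apply,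
      tmul_mul_tmul, mul_one, one_mul] at hab

/-- `τ` maps the subalgebra `Ψ(W,S)` onto `Ψ(W₁,S₁) ⊗_ℤ Ψ(W₂,S₂)`
(the subring of `Ω₁ ⊗_ℤ Ω₂` generated by the pure tensors `a ⊗ b` with `a ∈ Ψ₁`,
`b ∈ Ψ₂`). -/
theorem statement7 {B₁ B₂ : Type*} [Fintype B₁] [DecidableEq B₁] [Fintype B₂]
    [DecidableEq B₂] (M₁ : CoxeterMatrix B₁) (M₂ : CoxeterMatrix B₂)
    {W₁ W₂ : Type*} [Group W₁] [Group W₂] [Finite W₁] [Finite W₂]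
    (cs₁ : CoxeterSystem M₁ W₁) (cs₂ : CoxeterSystem M₂ W₂)
    (cs : CoxeterSystem (prodMatrix M₁ M₂) (W₁ × W₂))
    (t : Omega ℤ (prodMatrix M₁ M₂) →+* Omega ℤ M₁ ⊗[ℤ] Omega ℤ M₂)
    (ht : TauCond ℤ M₁ M₂ ⇑t) :
    Subring.map t (Psi ℤ (prodMatrix M₁ M₂)) =
      Subring.closure
        {z : Omega ℤ M₁ ⊗[ℤ] Omega ℤ M₂ |
          ∃ a ∈ Psi ℤ M₁, ∃ b ∈ Psi ℤ M₂, z = a ⊗ₜ[ℤ] b} :=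
  statement7_general M₁ M₂ t ht

end WGraphPaper

end
end
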